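/- Let X be a Banach function space on 𝕋 such that the backward shift Toeplitz operator T(e_{-1}) on H[X] has essential norm equal to 1. Then for every symbol of the form a = e_{-n} h with n ≥ 1 and h ∈ H^∞, the Toeplitz operator T(a) : H[X] → H[X] satisfies ‖T(a)‖_e ≤ ‖a‖_{L^∞}. -/

import Mathlib

open Complex Real Filter

noncomputable section

abbrev UC := AddCircle (2 * Real.pi)

instance : Fact (0 < 2 * Real.pi) := ⟨by positivity⟩

abbrev mUC : MeasureTheory.Measure UC := AddCircle.haarAddCircle

lemma norm_fourier_eq_one (n : ℤ) (t : UC) : ‖(fourier n t : ℂ)‖ = 1 :=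
  Circle.norm_coe _

lemma fourierCoeff_congr_ae' {f g : UC → ℂ} (h : f =ᵐ[mUC] g) (n : ℤ) :
    fourierCoeff f n = fourierCoeff g n := by
  unfold fourierCoeff
  exact MeasureTheory.integral_congr_ae (h.mono fun t ht => by simp only [ht])

lemma integrable_fourier_smul {f : UC → ℂ} (hf : MeasureTheory.Integrable f mUC) (n : ℤ) :
    MeasureTheory.Integrable (fun t => fourier n t • f t) mUC := by
  have : (fun t => fourier n t • f t) = fun t => (fourier n t : ℂ) * f t := rfl
  rw [this]
  exact hf.bdd_mul ((fourier n).continuous.aestronglyMeasurable)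
    (Filter.Eventually.of_forall fun t => (norm_fourier_eq_one n t).le)

lemma fourierCoeff_add {f g : UC → ℂ} (hf : MeasureTheory.Integrable f mUC)
    (hg : MeasureTheory.Integrable g mUC) (n : ℤ) :
    fourierCoeff (fun t => f t + g t) n = fourierCoeff f n + fourierCoeff g n := by
  unfold fourierCoeff
  simp_rw [smul_add]
  exact MeasureTheory.integral_add (integrable_fourier_smul hf _) (integrable_fourier_smul hg _)

lemma fourierCoeff_smul (c : ℂ) (f : UC → ℂ) (n : ℤ) :
    fourierCoeff (fun t => c * f t) n = c * fourierCoeff f n :=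
  fourierCoeff.const_mul f c n

structure BFS where
  X : Type
  [nacg : NormedAddCommGroup X]
  [nsp : NormedSpace ℂ X]
  [cs : CompleteSpace X]
  toAE : X →ₗ[ℂ] (UC →ₘ[mUC] ℂ)
  inj : Function.Injective toAE
  integrable : ∀ x : X, MeasureTheory.Integrable (toAE x) mUC
  lattice : ∀ (x : X) (g : UC →ₘ[mUC] ℂ), (∀ᵐ t ∂mUC, ‖g t‖ ≤ ‖toAE x t‖) →
      ∃ y : X, toAE y = g ∧ ‖y‖ ≤ ‖x‖
  one_mem : ∃ x : X, (toAE x : UC → ℂ) =ᵐ[mUC] fun _ => (1 : ℂ)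
  l1_bound : ∃ C : ℝ, 0 < C ∧ ∀ x : X, ∫ t, ‖(toAE x : UC → ℂ) t‖ ∂mUC ≤ C * ‖x‖

attribute [instance] BFS.nacg BFS.nsp BFS.cs

/-- The `n`-th Fourier coefficient, as a linear functional on a Banach function space. -/
def BFS.fc (E : BFS) (n : ℤ) : E.X →ₗ[ℂ] ℂ where
  toFun x := fourierCoeff (E.toAE x : UC → ℂ) n
  map_add' x y := by
    have h1 : (E.toAE (x + y) : UC → ℂ) =ᵐ[mUC]
        fun t => (E.toAE x : UC → ℂ) t + (E.toAE y : UC → ℂ) t := by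
      rw [map_add]; exact MeasureTheory.AEEqFun.coeFn_add _ _
    rw [fourierCoeff_congr_ae' h1 n, fourierCoeff_add (E.integrable x) (E.integrable y)]
  map_smul' c x := by
    have h1 : (E.toAE (c • x) : UC → ℂ) =ᵐ[mUC]
        fun t => c * (E.toAE x : UC → ℂ) t := by
      rw [map_smul]
      exact (MeasureTheory.AEEqFun.coeFn_smul c _).trans (by filter_upwards with t; rfl)
    rw [fourierCoeff_congr_ae' h1 n, fourierCoeff_smul]; rfl

/-- The abstract Hardy space `H[X]` built upon a Banach function space `X`. -/
def BFS.Hardy (E : BFS) : Submodule ℂ E.X where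
  carrier := {x | ∀ n : ℤ, n < 0 → E.fc n x = 0}
  add_mem' := by intro a b ha hb n hn; rw [map_add, ha n hn, hb n hn, add_zero]
  zero_mem' := by intro n hn; rw [map_zero]
  smul_mem' := by intro c x hx n hn; rw [map_smul, hx n hn, smul_zero]

/-- The essential norm: distance to the compact operators. -/
def essNorm {Y : Type*} [NormedAddCommGroup Y] [NormedSpace ℂ Y] (A : Y →L[ℂ] Y) : ℝ :=
  sInf {c : ℝ | ∃ K : Y →L[ℂ] Y, IsCompactOperator K ∧ c = ‖A - K‖}

/-- `T` is the Toeplitz operator with symbol `a` on `H[X]`: for every `f ∈ H[X]`,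
`T f = P (a f)`, i.e. the Fourier coefficients of `T f` agree with those of `a f` on
nonnegative indices (negative ones vanish automatically since `T f ∈ H[X]`). -/
def IsToeplitz (E : BFS) (a : UC → ℂ) (T : E.Hardy →L[ℂ] E.Hardy) : Prop :=
  ∀ f : E.Hardy, ∀ n : ℤ, 0 ≤ n →
    E.fc n (T f : E.X) =
      fourierCoeff (fun t => a t * (E.toAE (f : E.X) : UC → ℂ) t) n

/-- `Pp` realizes the Riesz projection `P` as a bounded operator on `X`. -/
def IsRieszOp (E : BFS) (Pp : E.X →L[ℂ] E.X) : Prop :=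
  ∀ x : E.X, (∀ n : ℤ, n < 0 → E.fc n (Pp x) = 0) ∧
    (∀ n : ℤ, 0 ≤ n → E.fc n (Pp x) = E.fc n x)

/-- Membership in the Sarason algebra `C + H^∞`. -/
def MemCplusHinf (a : UC → ℂ) : Prop :=
  ∃ (g : C(UC, ℂ)) (h : UC → ℂ), MeasureTheory.MemLp h ⊤ mUC ∧
    (∀ n : ℤ, n < 0 → fourierCoeff h n = 0) ∧ a =ᵐ[mUC] fun t => g t + h t

/-- The `n`-th Fourier partial sum `P_n f = ∑_{k=0}^{n-1} f̂(k) e_k`. -/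
def partialSum (n : ℕ) (f : UC → ℂ) : UC → ℂ :=
  fun t => ∑ k ∈ Finset.range n, fourierCoeff f (k : ℤ) • fourier (k : ℤ) t


/-!
Since `T(e₋₁)ⁿ T(h) = T(e₋ₙ h)` and, for `h ∈ H^∞`, `T(h)` is multiplication by `h` (of norm at
most `‖h‖_∞`), submultiplicativity of the essential norm gives
`‖T(e₋ₙ h)‖ₑ ≤ ‖T(e₋₁)‖ₑⁿ ‖T(h)‖ ≤ ‖h‖_∞ = ‖e₋ₙ h‖_∞`.
The analytic input is that multiplication by `h` preserves `H[X]` and that an element of `X` is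
determined by its Fourier coefficients. Both come from Fejér means `σ_N u = K_N ∗ u`: they are
trigonometric polynomials built from the coefficients of `u`, are contractive in `L¹` because
`K_N ≥ 0` has integral `1`, and hence converge to `u` in `L¹`, as they do on trigonometric
polynomials.
-/

open MeasureTheory Finset
open ContinuousLinearMap (lsmul)
open scoped Convolution Topology

lemma integrable_of_continuous {E : Type*} [NormedAddCommGroup E] {f : UC → E}
    (hf : Continuous f) : Integrable f mUC :=
  hf.integrable_of_hasCompactSupport (HasCompactSupport.of_compactSpace f)

lemma integral_norm_add_le {α E : Type*} [MeasurableSpace α] {μ : Measure α}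
    [NormedAddCommGroup E] {f g : α → E} (hf : Integrable f μ) (hg : Integrable g μ) :
    ∫ x, ‖f x + g x‖ ∂μ ≤ ∫ x, ‖f x‖ ∂μ + ∫ x, ‖g x‖ ∂μ := by
  rw [← integral_add hf.norm hg.norm]
  exact integral_mono (hf.add hg).norm (hf.norm.add hg.norm) fun x => norm_add_le _ _

lemma MeasureTheory.MemLp.ae_norm_le_eLpNorm_top {α E : Type*} [MeasurableSpace α]
    {μ : Measure α} [NormedAddCommGroup E] {f : α → E} (hf : MemLp f ⊤ μ) :
    ∀ᵐ t ∂μ, ‖f t‖ ≤ (eLpNorm f ⊤ μ).toReal := by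
  filter_upwards [ae_le_eLpNormEssSup (f := f) (μ := μ)] with t ht
  rw [eLpNorm_exponent_top, ← toReal_enorm]
  exact ENNReal.toReal_mono (eLpNorm_exponent_top (f := f) ▸ hf.2.ne) ht

lemma integral_fourier (m : ℤ) : ∫ t, (fourier m t : ℂ) ∂mUC = if m = 0 then 1 else 0 := by
  have h := congrFun (fourierCoeff_fourier (T := 2 * Real.pi) m) 0
  simp only [fourierCoeff, neg_zero, fourier_zero, one_smul] at h
  rw [h, Pi.single_apply]
  exact if_congr eq_comm rfl rfl

lemma fourier_sub_apply (q : ℤ) (t s : UC) :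
    (fourier q (t - s) : ℂ) = fourier q t * fourier (-q) s := by
  simp [fourier_apply, sub_eq_add_neg, AddCircle.toCircle_add, AddCircle.toCircle_neg, neg_smul]

lemma fourierCoeff_fourier_mul (j m : ℤ) (u : UC → ℂ) :
    fourierCoeff (fun t => fourier j t * u t) m = fourierCoeff u (m - j) := by
  simp only [fourierCoeff, smul_eq_mul, show -(m - j) = -m + j by ring, fourier_add]
  congr 1
  funext t
  ring

lemma integral_mul_fourier (h : UC → ℂ) (q : ℤ) :
    ∫ t, h t * fourier q t ∂mUC = fourierCoeff h (-q) := by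
  simp only [fourierCoeff, neg_neg, smul_eq_mul, mul_comm]

def fejerKernel (N : ℕ) (t : UC) : ℝ :=
  (N : ℝ)⁻¹ * ‖∑ k ∈ range N, (fourier (k : ℤ) t : ℂ)‖ ^ 2

/-- `σ_N u = ∑_{|q| < N} (1 - |q| / N) û(q) e_q`, the frequency `q = k - j` being counted once for
each pair `(j, k) ∈ [0, N)²`. -/
def fejerMean (N : ℕ) (u : UC → ℂ) (t : UC) : ℂ :=
  (N : ℂ)⁻¹ * ∑ j ∈ range N, ∑ k ∈ range N,
    fourierCoeff u ((k : ℤ) - j) * fourier ((k : ℤ) - j) t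

lemma fejerKernel_nonneg (N : ℕ) (t : UC) : 0 ≤ fejerKernel N t := by
  unfold fejerKernel; positivity

lemma continuous_fejerKernel (N : ℕ) : Continuous (fejerKernel N) := by
  unfold fejerKernel; fun_prop

lemma ofReal_fejerKernel (N : ℕ) (t : UC) :
    (fejerKernel N t : ℂ) =
      (N : ℂ)⁻¹ * ∑ j ∈ range N, ∑ k ∈ range N, (fourier ((k : ℤ) - j) t : ℂ) := by
  have hsq : ((‖∑ k ∈ range N, (fourier (k : ℤ) t : ℂ)‖ ^ 2 : ℝ) : ℂ) =
      ∑ j ∈ range N, ∑ k ∈ range N, (fourier ((k : ℤ) - j) t : ℂ) := by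
    rw [Complex.ofReal_pow, ← Complex.mul_conj', map_sum, sum_mul_sum, sum_comm]
    refine sum_congr rfl fun j _ => sum_congr rfl fun k _ => ?_
    rw [sub_eq_add_neg, fourier_add, fourier_neg]
  rw [fejerKernel, Complex.ofReal_mul, hsq]
  push_cast
  rfl

lemma integral_fejerKernel {N : ℕ} (hN : N ≠ 0) : ∫ t, fejerKernel N t ∂mUC = 1 := by
  have hint : ∀ q : ℤ, Integrable (fun t => (fourier q t : ℂ)) mUC :=
    fun q => integrable_of_continuous (fourier q).continuous
  apply Complex.ofReal_injective
  rw [← integral_complex_ofReal]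
  simp only [ofReal_fejerKernel]
  rw [integral_const_mul,
    integral_finsetSum _ fun j _ => integrable_finsetSum _ fun k _ => hint _]
  simp_rw [integral_finsetSum _ fun k _ => hint _, integral_fourier, sub_eq_zero, Nat.cast_inj,
    sum_ite_eq', mem_range]
  rw [sum_ite_of_true fun j hj => mem_range.mp hj, sum_const, card_range, nsmul_one,
    Complex.ofReal_one]
  exact inv_mul_cancel₀ (Nat.cast_ne_zero.mpr hN)

lemma fejerMean_eq_integral (N : ℕ) {u : UC → ℂ} (hu : Integrable u mUC) (t : UC) :
    fejerMean N u t = ∫ s, fejerKernel N (t - s) • u s ∂mUC := by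
  have hint : ∀ q : ℤ, Integrable (fun s => (fourier q t : ℂ) * (fourier (-q) s • u s)) mUC :=
    fun q => (integrable_fourier_smul hu (-q)).const_mul _
  have expand : ∀ s, fejerKernel N (t - s) • u s = (N : ℂ)⁻¹ * ∑ j ∈ range N, ∑ k ∈ range N,
      (fourier ((k : ℤ) - j) t : ℂ) * (fourier (-((k : ℤ) - j)) s • u s) := fun s => by
    simp only [Complex.real_smul, ofReal_fejerKernel, mul_assoc, sum_mul, fourier_sub_apply,
      smul_eq_mul]
  simp_rw [expand]
  rw [integral_const_mul,
    integral_finsetSum _ fun j _ => integrable_finsetSum _ fun k _ => hint _]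
  simp_rw [integral_finsetSum _ fun k _ => hint _, integral_const_mul]
  simp only [fejerMean, fourierCoeff, mul_comm]

lemma integral_norm_fejerMean_le (N : ℕ) {u : UC → ℂ} (hu : Integrable u mUC) :
    ∫ t, ‖fejerMean N u t‖ ∂mUC ≤ ∫ t, ‖u t‖ ∂mUC := by
  rcases eq_or_ne N 0 with rfl | hN
  · simpa [fejerMean] using integral_nonneg fun t => norm_nonneg (u t)
  have hK : Integrable (fejerKernel N) mUC := integrable_of_continuous (continuous_fejerKernel N)
  have hconv : fejerMean N u = fejerKernel N ⋆[lsmul ℝ ℝ, mUC] u := by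
    funext t
    rw [fejerMean_eq_integral N hu, convolution_lsmul_swap]
  have hle : ∀ t, ‖fejerMean N u t‖ ≤ (fejerKernel N ⋆[lsmul ℝ ℝ, mUC] fun s => ‖u s‖) t := by
    intro t
    rw [hconv, convolution_lsmul, convolution_lsmul]
    refine (norm_integral_le_integral_norm _).trans_eq
      (integral_congr_ae (.of_forall fun s => ?_))
    simp [abs_of_nonneg (fejerKernel_nonneg N s)]
  calc ∫ t, ‖fejerMean N u t‖ ∂mUC
      ≤ ∫ t, (fejerKernel N ⋆[lsmul ℝ ℝ, mUC] fun s => ‖u s‖) t ∂mUC :=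
        integral_mono (hconv ▸ hK.integrable_convolution _ hu).norm
          (hK.integrable_convolution _ hu.norm) hle
    _ = ∫ t, ‖u t‖ ∂mUC := by
        rw [integral_convolution _ hK hu.norm, integral_fejerKernel hN,
          ContinuousLinearMap.lsmul_apply, one_smul]

lemma continuous_fejerMean (N : ℕ) (u : UC → ℂ) : Continuous (fejerMean N u) := by
  unfold fejerMean; fun_prop

lemma fejerMean_add (N : ℕ) {u v : UC → ℂ} (hu : Integrable u mUC) (hv : Integrable v mUC) :
    fejerMean N (u + v) = fejerMean N u + fejerMean N v := by
  funext t
  simp only [fejerMean, fourierCoeff.add hu hv, Pi.add_apply, add_mul, sum_add_distrib, mul_add]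

lemma fejerMean_smul (N : ℕ) (c : ℂ) (u : UC → ℂ) :
    fejerMean N (c • u) = c • fejerMean N u := by
  funext t
  simp only [fejerMean, fourierCoeff.const_smul, Pi.smul_apply, smul_eq_mul, mul_sum]
  ring_nf

def diagonalCount (N : ℕ) (q : ℤ) : ℕ :=
  #{p ∈ range N ×ˢ range N | (p.2 : ℤ) - p.1 = q}

lemma diagonalCount_eq {N : ℕ} {q : ℤ} (h : q.natAbs ≤ N) :
    diagonalCount N q = N - q.natAbs := by
  rw [diagonalCount, ← card_range (N - q.natAbs)]
  refine card_bij' (fun p _ => p.1 - (-q).toNat) (fun m _ => (m + (-q).toNat, m + q.toNat))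
    ?_ ?_ ?_ ?_ <;> simp only [mem_filter, mem_product, mem_range, Prod.forall, Prod.mk.injEq]
  all_goals omega

lemma tendsto_diagonalCount_div (q : ℤ) :
    Tendsto (fun N : ℕ => (N : ℂ)⁻¹ * diagonalCount N q) atTop (𝓝 1) := by
  have hlim : Tendsto (fun N : ℕ => ((1 - (q.natAbs : ℝ) / N : ℝ) : ℂ)) atTop (𝓝 1) := by
    simpa using ((tendsto_const_div_atTop_nhds_zero_nat (q.natAbs : ℝ)).const_sub 1).ofReal
  refine hlim.congr' ?_
  filter_upwards [eventually_ge_atTop (max 1 q.natAbs)] with N hN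
  have hN0 : (N : ℂ) ≠ 0 := Nat.cast_ne_zero.mpr (by omega)
  rw [diagonalCount_eq (le_of_max_le_right hN), Nat.cast_sub (le_of_max_le_right hN)]
  push_cast
  field_simp

lemma fejerMean_fourier (N : ℕ) (q : ℤ) :
    fejerMean N (fourier q) = fun t => (N : ℂ)⁻¹ * diagonalCount N q * fourier q t := by
  funext t
  simp only [fejerMean, fourierCoeff_fourier, Pi.single_apply, ite_mul, one_mul, zero_mul,
    mul_assoc]
  congr 1
  rw [← sum_product', ← sum_filter, sum_congr rfl fun p hp => by rw [(mem_filter.mp hp).2],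
    sum_const, nsmul_eq_mul, diagonalCount]

lemma tendsto_integral_norm_fejerMean_sub_of_mem_span {p : C(UC, ℂ)}
    (hp : p ∈ Submodule.span ℂ (Set.range fourier)) :
    Tendsto (fun N => ∫ t, ‖fejerMean N p t - p t‖ ∂mUC) atTop (𝓝 0) := by
  induction hp using Submodule.span_induction with
  | mem x hx =>
    obtain ⟨q, rfl⟩ := hx
    have hconst : ∀ N t, ‖fejerMean N (fourier q) t - fourier q t‖
        = ‖(N : ℂ)⁻¹ * diagonalCount N q - 1‖ := fun N t => by
      rw [fejerMean_fourier, ← sub_one_mul, norm_mul, norm_fourier_eq_one, mul_one]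
    simp_rw [hconst, integral_const, probReal_univ, one_smul]
    simpa using ((tendsto_diagonalCount_div q).sub_const 1).norm
  | zero => simp [fejerMean, fourierCoeff]
  | add x y _ _ hx hy =>
    have hxi := integrable_of_continuous x.continuous
    have hyi := integrable_of_continuous y.continuous
    refine squeeze_zero (fun N => integral_nonneg fun t => norm_nonneg _) (fun N => ?_)
      (by simpa using hx.add hy)
    simp only [ContinuousMap.coe_add, fejerMean_add N hxi hyi, Pi.add_apply, add_sub_add_comm]
    exact integral_norm_add_le
      ((integrable_of_continuous (continuous_fejerMean N x)).sub hxi)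
      ((integrable_of_continuous (continuous_fejerMean N y)).sub hyi)
  | smul c x _ hx =>
    simp only [ContinuousMap.coe_smul, fejerMean_smul, Pi.smul_apply, ← smul_sub, norm_smul,
      integral_const_mul]
    simpa using hx.const_mul ‖c‖

lemma exists_mem_span_fourier_integral_norm_sub_le {u : UC → ℂ} (hu : Integrable u mUC)
    {ε : ℝ} (hε : 0 < ε) :
    ∃ p ∈ Submodule.span ℂ (Set.range (fourier (T := 2 * Real.pi))),
      ∫ t, ‖u t - p t‖ ∂mUC ≤ ε := by
  obtain ⟨g, hug, hgi⟩ := hu.exists_boundedContinuous_integral_sub_le (half_pos hε)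
  have hdense : Dense (Submodule.span ℂ (Set.range (fourier (T := 2 * Real.pi))) :
      Set C(UC, ℂ)) :=
    Submodule.dense_iff_topologicalClosure_eq_top.mpr span_fourier_closure_eq_top
  obtain ⟨p, hgp, hp⟩ := Metric.dense_iff.mp hdense g.toContinuousMap (ε / 2) (half_pos hε)
  have hpi := integrable_of_continuous p.continuous
  have hgp' : ∫ t, ‖g t - p t‖ ∂mUC ≤ ε / 2 :=
    calc ∫ t, ‖g t - p t‖ ∂mUC ≤ ∫ _, ε / 2 ∂mUC := by
          refine integral_mono_of_nonneg (.of_forall fun t => norm_nonneg _) (integrable_const _)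
            (.of_forall fun t => ?_)
          change ‖g t - p t‖ ≤ ε / 2
          rw [← dist_eq_norm, dist_comm]
          exact (ContinuousMap.dist_apply_le_dist t).trans (Metric.mem_ball.mp hgp).le
      _ = ε / 2 := by simp
  refine ⟨p, hp, ?_⟩
  calc ∫ t, ‖u t - p t‖ ∂mUC = ∫ t, ‖(u t - g t) + (g t - p t)‖ ∂mUC := by simp
    _ ≤ ∫ t, ‖u t - g t‖ ∂mUC + ∫ t, ‖g t - p t‖ ∂mUC :=
        integral_norm_add_le (hu.sub hgi) (hgi.sub hpi)
    _ ≤ ε := by linarith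

lemma tendsto_integral_norm_fejerMean_sub {u : UC → ℂ} (hu : Integrable u mUC) :
    Tendsto (fun N => ∫ t, ‖fejerMean N u t - u t‖ ∂mUC) atTop (𝓝 0) := by
  refine tendsto_order.2 ⟨fun a ha => .of_forall fun N => ha.trans_le
    (integral_nonneg fun t => norm_nonneg _), fun a ha => ?_⟩
  obtain ⟨p, hp, hup⟩ :=
    exists_mem_span_fourier_integral_norm_sub_le hu (by positivity : 0 < a / 4)
  have hpi := integrable_of_continuous p.continuous
  filter_upwards [(tendsto_order.1 (tendsto_integral_norm_fejerMean_sub_of_mem_span hp)).2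
    (a / 4) (by positivity)] with N hN
  have hσp := integrable_of_continuous (continuous_fejerMean N p)
  have hσu : fejerMean N u = fejerMean N (u - p) + fejerMean N p := by
    rw [← fejerMean_add N (hu.sub hpi) hpi, sub_add_cancel]
  have hsplit : ∀ t, fejerMean N u t - u t =
      fejerMean N (u - p) t + ((fejerMean N p t - p t) + (p t - u t)) := fun t => by
    rw [hσu, Pi.add_apply]
    ring
  have hσ : ∫ t, ‖fejerMean N (u - p) t‖ ∂mUC ≤ a / 4 :=
    (integral_norm_fejerMean_le N (hu.sub hpi)).trans hup
  have hpu : ∫ t, ‖p t - u t‖ ∂mUC ≤ a / 4 := by simpa only [norm_sub_rev] using hup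
  calc ∫ t, ‖fejerMean N u t - u t‖ ∂mUC
      ≤ ∫ t, ‖fejerMean N (u - p) t‖ ∂mUC
          + (∫ t, ‖fejerMean N p t - p t‖ ∂mUC + ∫ t, ‖p t - u t‖ ∂mUC) := by
        simp_rw [hsplit]
        exact (integral_norm_add_le (integrable_of_continuous (continuous_fejerMean N _))
          ((hσp.sub hpi).add (hpi.sub hu))).trans
            (add_le_add le_rfl (integral_norm_add_le (hσp.sub hpi) (hpi.sub hu)))
    _ < a := by linarith

theorem ae_eq_zero_of_fourierCoeff_eq_zero {u : UC → ℂ} (hu : Integrable u mUC)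
    (h : ∀ n, fourierCoeff u n = 0) : u =ᵐ[mUC] 0 := by
  have hσ : ∀ N, fejerMean N u = 0 := fun N => funext fun t => by simp [fejerMean, h]
  have hnorm : ∫ t, ‖u t‖ ∂mUC = 0 := by
    simpa [hσ] using tendsto_integral_norm_fejerMean_sub hu
  filter_upwards [(integral_eq_zero_iff_of_nonneg (fun t => norm_nonneg (u t)) hu.norm).mp hnorm]
    with t ht
  simpa using ht

theorem integral_mul_eq_zero_of_fourierCoeff_mul_eq_zero {h g : UC → ℂ} (hh : MemLp h ⊤ mUC)
    (hg : Integrable g mUC) (hhg : ∀ q, fourierCoeff g q * fourierCoeff h (-q) = 0) :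
    ∫ t, h t * g t ∂mUC = 0 := by
  set M := (eLpNorm h ⊤ mUC).toReal
  have hM := hh.ae_norm_le_eLpNorm_top
  have hhe : ∀ q : ℤ, Integrable (fun t => h t * fourier q t) mUC := fun q =>
    (hh.integrable le_top).mul_bdd (fourier q).continuous.aestronglyMeasurable
      (.of_forall fun t => (norm_fourier_eq_one q t).le)
  -- `∫ h σ_N g` vanishes term by term, and `σ_N g → g` in `L¹`.
  have hσ : ∀ N, ∫ t, h t * fejerMean N g t ∂mUC = 0 := by
    intro N
    have expand : ∀ t, h t * fejerMean N g t = (N : ℂ)⁻¹ * ∑ j ∈ range N, ∑ k ∈ range N,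
        fourierCoeff g ((k : ℤ) - j) * (h t * fourier ((k : ℤ) - j) t) := fun t => by
      simp only [fejerMean, mul_sum]
      ring_nf
    simp_rw [expand]
    rw [integral_const_mul, integral_finsetSum _ fun j _ => integrable_finsetSum _ fun k _ =>
      (hhe _).const_mul _]
    simp_rw [integral_finsetSum _ fun k _ => (hhe _).const_mul _, integral_const_mul,
      integral_mul_fourier, hhg, sum_const_zero, mul_zero]
  have hbound : ∀ N, ‖∫ t, h t * g t ∂mUC‖ ≤ M * ∫ t, ‖fejerMean N g t - g t‖ ∂mUC := by
    intro N
    have hσi := integrable_of_continuous (continuous_fejerMean N g)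
    have hdiff : ∫ t, h t * g t ∂mUC = ∫ t, h t * (g t - fejerMean N g t) ∂mUC := by
      simp_rw [mul_sub]
      rw [integral_sub (hg.bdd_mul hh.1 hM) (hσi.bdd_mul hh.1 hM), hσ, sub_zero]
    rw [hdiff, ← integral_const_mul]
    refine (norm_integral_le_integral_norm _).trans (integral_mono_ae
      ((hg.sub hσi).bdd_mul hh.1 hM).norm (((hσi.sub hg).norm).const_mul M) ?_)
    filter_upwards [hM] with t ht
    rw [norm_mul, norm_sub_rev]
    exact mul_le_mul_of_nonneg_right ht (norm_nonneg _)
  have hlim : Tendsto (fun N => M * ∫ t, ‖fejerMean N g t - g t‖ ∂mUC) atTop (𝓝 0) := by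
    simpa using (tendsto_integral_norm_fejerMean_sub hg).const_mul M
  exact norm_le_zero_iff.mp (ge_of_tendsto' hlim hbound)

theorem fourierCoeff_mul_eq_zero_of_neg {h u : UC → ℂ} (hh : MemLp h ⊤ mUC)
    (hh_neg : ∀ j < 0, fourierCoeff h j = 0) (hu : Integrable u mUC)
    (hu_neg : ∀ j < 0, fourierCoeff u j = 0) {m : ℤ} (hm : m < 0) :
    fourierCoeff (fun t => h t * u t) m = 0 := by
  have hrepr : fourierCoeff (fun t => h t * u t) m =
      ∫ t, h t * (fourier (-m) t * u t) ∂mUC := by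
    simp only [fourierCoeff, smul_eq_mul]
    congr 1
    funext t
    ring
  rw [hrepr]
  refine integral_mul_eq_zero_of_fourierCoeff_mul_eq_zero hh (integrable_fourier_smul hu _)
    fun q => ?_
  rw [fourierCoeff_fourier_mul, sub_neg_eq_add]
  rcases lt_or_ge (q + m) 0 with hq | hq
  · rw [hu_neg _ hq, zero_mul]
  · rw [hh_neg _ (by omega), mul_zero]

def aeMulLeft (φ : UC →ₘ[mUC] ℂ) : (UC →ₘ[mUC] ℂ) →ₗ[ℂ] (UC →ₘ[mUC] ℂ) where
  toFun g := φ * g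
  map_add' f g := by
    induction φ using AEEqFun.induction_on
    induction f using AEEqFun.induction_on
    induction g using AEEqFun.induction_on
    simp only [AEEqFun.mk_mul_mk, AEEqFun.mk_add_mk, mul_add]
  map_smul' c g := by
    induction φ using AEEqFun.induction_on
    induction g using AEEqFun.induction_on
    simp only [AEEqFun.mk_mul_mk, AEEqFun.smul_mk, RingHom.id_apply, mul_smul_comm]

namespace BFS

lemma eq_of_fc_eq (E : BFS) {x y : E.X} (h : ∀ n, E.fc n x = E.fc n y) : x = y := by
  rw [← sub_eq_zero]
  refine (injective_iff_map_eq_zero E.toAE).mp E.inj _ (AEEqFun.ext ?_)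
  refine (ae_eq_zero_of_fourierCoeff_eq_zero (E.integrable (x - y)) fun n => ?_).trans
    AEEqFun.coeFn_zero.symm
  change E.fc n (x - y) = 0
  rw [map_sub, h n, sub_self]

variable {E : BFS} {h : UC → ℂ}

lemma exists_toAE_eq_mul (hh : MemLp h ⊤ mUC) (x : E.X) :
    ∃ y : E.X, E.toAE y = AEEqFun.mk h hh.1 * E.toAE x ∧
      ‖y‖ ≤ (eLpNorm h ⊤ mUC).toReal * ‖x‖ := by
  set M := (eLpNorm h ⊤ mUC).toReal
  have hM : 0 ≤ M := ENNReal.toReal_nonneg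
  have hbound : ∀ᵐ t ∂mUC,
      ‖(AEEqFun.mk h hh.1 * E.toAE x) t‖ ≤ ‖E.toAE ((M : ℂ) • x) t‖ := by
    rw [map_smul]
    filter_upwards [AEEqFun.coeFn_mul (AEEqFun.mk h hh.1) (E.toAE x), AEEqFun.coeFn_mk h hh.1,
      AEEqFun.coeFn_smul (M : ℂ) (E.toAE x), hh.ae_norm_le_eLpNorm_top] with t h1 h2 h3 h4
    rw [h1, h3, Pi.mul_apply, Pi.smul_apply, h2, norm_mul, norm_smul, Complex.norm_real,
      Real.norm_of_nonneg hM]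
    exact mul_le_mul_of_nonneg_right h4 (norm_nonneg _)
  obtain ⟨y, hy, hyx⟩ := E.lattice _ _ hbound
  refine ⟨y, hy, hyx.trans_eq ?_⟩
  rw [norm_smul, Complex.norm_real, Real.norm_of_nonneg hM]

/-- The lattice property puts `h x` back into `X`, and the injectivity of `toAE` makes the choice
linear. -/
def mulOp (E : BFS) (hh : MemLp h ⊤ mUC) : E.X →ₗ[ℂ] E.X :=
  (LinearEquiv.ofInjective E.toAE E.inj).symm.toLinearMap ∘ₗ
    (aeMulLeft (AEEqFun.mk h hh.1) ∘ₗ E.toAE).codRestrict (LinearMap.range E.toAE)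
      fun x => ⟨_, (exists_toAE_eq_mul hh x).choose_spec.1⟩

lemma toAE_mulOp (hh : MemLp h ⊤ mUC) (x : E.X) :
    E.toAE (E.mulOp hh x) = AEEqFun.mk h hh.1 * E.toAE x :=
  congrArg Subtype.val (LinearEquiv.apply_symm_apply (LinearEquiv.ofInjective E.toAE E.inj)
    ⟨_, ⟨_, (exists_toAE_eq_mul hh x).choose_spec.1⟩⟩)

lemma norm_mulOp_le (hh : MemLp h ⊤ mUC) (x : E.X) :
    ‖E.mulOp hh x‖ ≤ (eLpNorm h ⊤ mUC).toReal * ‖x‖ := by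
  obtain ⟨y, hy, hyx⟩ := exists_toAE_eq_mul hh x
  rwa [E.inj (hy.trans (toAE_mulOp hh x).symm)] at hyx

lemma fc_mulOp (hh : MemLp h ⊤ mUC) (x : E.X) (n : ℤ) :
    E.fc n (E.mulOp hh x) = fourierCoeff (fun t => h t * E.toAE x t) n := by
  change fourierCoeff (E.toAE (E.mulOp hh x)) n = _
  rw [toAE_mulOp]
  exact fourierCoeff_congr_ae'
    ((AEEqFun.coeFn_mul _ _).trans ((AEEqFun.coeFn_mk h hh.1).mul .rfl)) n

lemma mulOp_mem_hardy (hh : MemLp h ⊤ mUC) (hh_neg : ∀ j < 0, fourierCoeff h j = 0)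
    {x : E.X} (hx : x ∈ E.Hardy) : E.mulOp hh x ∈ E.Hardy := fun n hn => by
  rw [fc_mulOp]
  exact fourierCoeff_mul_eq_zero_of_neg hh hh_neg (E.integrable x) hx hn

def hardyMulOp (E : BFS) (hh : MemLp h ⊤ mUC) (hh_neg : ∀ j < 0, fourierCoeff h j = 0) :
    E.Hardy →L[ℂ] E.Hardy :=
  ((E.mulOp hh).restrict fun _ hx => mulOp_mem_hardy hh hh_neg hx).mkContinuous
    (eLpNorm h ⊤ mUC).toReal fun f => norm_mulOp_le hh (f : E.X)

lemma norm_hardyMulOp_le (hh : MemLp h ⊤ mUC) (hh_neg : ∀ j < 0, fourierCoeff h j = 0) :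
    ‖E.hardyMulOp hh hh_neg‖ ≤ (eLpNorm h ⊤ mUC).toReal :=
  LinearMap.mkContinuous_norm_le _ ENNReal.toReal_nonneg _

lemma isToeplitz_hardyMulOp (hh : MemLp h ⊤ mUC) (hh_neg : ∀ j < 0, fourierCoeff h j = 0) :
    IsToeplitz E h (E.hardyMulOp hh hh_neg) := fun f n _ => fc_mulOp hh (f : E.X) n

end BFS

namespace IsToeplitz

variable {E : BFS} {T : E.Hardy →L[ℂ] E.Hardy}

lemma ext {a : UC → ℂ} {T' : E.Hardy →L[ℂ] E.Hardy} (hT : IsToeplitz E a T)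
    (hT' : IsToeplitz E a T') : T = T' := by
  ext f : 1
  refine Subtype.ext (E.eq_of_fc_eq fun n => ?_)
  rcases lt_or_ge n 0 with hn | hn
  · rw [(T f).2 n hn, (T' f).2 n hn]
  · rw [hT f n hn, hT' f n hn]

lemma fc_pow_apply (hT : IsToeplitz E (fun t => fourier (-1 : ℤ) t) T) (k : ℕ) (f : E.Hardy)
    {m : ℤ} (hm : 0 ≤ m) : E.fc m ((T ^ k) f : E.X) = E.fc (m + k) (f : E.X) := by
  induction k generalizing m with
  | zero => simp
  | succ k ih =>
    rw [pow_succ', mul_apply_eq_comp, hT _ m hm, fourierCoeff_fourier_mul]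
    change E.fc (m - -1) _ = _
    rw [ih (by omega)]
    push_cast
    ring_nf

lemma shift_pow_mul (hT : IsToeplitz E (fun t => fourier (-1 : ℤ) t) T) {a : UC → ℂ}
    {S : E.Hardy →L[ℂ] E.Hardy} (hS : IsToeplitz E a S) (n : ℕ) :
    IsToeplitz E (fun t => fourier (-(n : ℤ)) t * a t) (T ^ n * S) := fun f m hm => by
  rw [mul_apply_eq_comp, hT.fc_pow_apply n _ hm, hS _ _ (by omega)]
  simp only [mul_assoc]
  rw [fourierCoeff_fourier_mul, sub_neg_eq_add]

end IsToeplitz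

section EssentialNorm

variable {Y : Type*} [NormedAddCommGroup Y] [NormedSpace ℂ Y]

lemma essNorm_le_norm_sub (A : Y →L[ℂ] Y) {K : Y →L[ℂ] Y} (hK : IsCompactOperator K) :
    essNorm A ≤ ‖A - K‖ :=
  csInf_le ⟨0, fun _ ⟨_, _, hc⟩ => hc ▸ norm_nonneg _⟩ ⟨K, hK, rfl⟩

lemma essNorm_le_norm (A : Y →L[ℂ] Y) : essNorm A ≤ ‖A‖ := by
  simpa using essNorm_le_norm_sub A (K := 0) isCompactOperator_zero

lemma essNorm_nonneg (A : Y →L[ℂ] Y) : 0 ≤ essNorm A :=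
  Real.sInf_nonneg fun _ ⟨_, _, hc⟩ => hc ▸ norm_nonneg _

lemma exists_isCompactOperator_norm_sub_lt (A : Y →L[ℂ] Y) {ε : ℝ} (hε : 0 < ε) :
    ∃ K : Y →L[ℂ] Y, IsCompactOperator K ∧ ‖A - K‖ < essNorm A + ε := by
  obtain ⟨_, ⟨K, hK, rfl⟩, hlt⟩ :=
    Real.lt_sInf_add_pos (s := {c : ℝ | ∃ K : Y →L[ℂ] Y, IsCompactOperator K ∧ c = ‖A - K‖})
      ⟨_, 0, isCompactOperator_zero, rfl⟩ hε
  exact ⟨K, hK, hlt⟩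

lemma essNorm_mul_le (A B : Y →L[ℂ] Y) : essNorm (A * B) ≤ essNorm A * essNorm B := by
  have key : ∀ ε > 0, essNorm (A * B) ≤ (essNorm A + ε) * (essNorm B + ε) := by
    intro ε hε
    obtain ⟨K, hK, hAK⟩ := exists_isCompactOperator_norm_sub_lt A hε
    obtain ⟨L, hL, hBL⟩ := exists_isCompactOperator_norm_sub_lt B hε
    have hC : IsCompactOperator (A * L + K * B - K * L) := by
      simp only [FunLike.coe_sub, FunLike.coe_add]
      exact ((hL.clm_comp A).add (hK.comp_clm B)).sub (hK.comp_clm L)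
    calc essNorm (A * B) ≤ ‖A * B - (A * L + K * B - K * L)‖ := essNorm_le_norm_sub _ hC
      _ = ‖(A - K) * (B - L)‖ := by congr 1; noncomm_ring
      _ ≤ ‖A - K‖ * ‖B - L‖ := norm_mul_le _ _
      _ ≤ (essNorm A + ε) * (essNorm B + ε) :=
        mul_le_mul hAK.le hBL.le (norm_nonneg _) (by linarith [essNorm_nonneg A])
  have hlim : Tendsto (fun ε => (essNorm A + ε) * (essNorm B + ε)) (𝓝[>] 0)
      (𝓝 (essNorm A * essNorm B)) := by
    have hcont : Continuous fun ε : ℝ => (essNorm A + ε) * (essNorm B + ε) := by fun_prop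
    simpa using (hcont.tendsto 0).mono_left nhdsWithin_le_nhds
  exact ge_of_tendsto hlim (eventually_nhdsWithin_of_forall key)

lemma essNorm_pow_le (A : Y →L[ℂ] Y) : ∀ n : ℕ, essNorm (A ^ n) ≤ essNorm A ^ n
  | 0 => by simpa using (essNorm_le_norm (1 : Y →L[ℂ] Y)).trans ContinuousLinearMap.norm_id_le
  | n + 1 => by
    rw [pow_succ, pow_succ]
    exact (essNorm_mul_le _ _).trans
      (mul_le_mul_of_nonneg_right (essNorm_pow_le A n) (essNorm_nonneg A))

end EssentialNorm

/-- if `‖T(e_{-1})‖_e = 1` on `H[X]`, then `‖T(e_{-n}h)‖_e ≤ ‖e_{-n}h‖_{L^∞}`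
for every `n ≥ 1` and `h ∈ H^∞`. -/
theorem stmt9 (E : BFS) (T1 : E.Hardy →L[ℂ] E.Hardy)
    (hT1 : IsToeplitz E (fun t => fourier (-1 : ℤ) t) T1)
    (hess : essNorm T1 = 1) :
    ∀ n : ℕ, 1 ≤ n → ∀ h : UC → ℂ, MeasureTheory.MemLp h ⊤ mUC →
      (∀ j : ℤ, j < 0 → fourierCoeff h j = 0) →
      ∀ Ta : E.Hardy →L[ℂ] E.Hardy,
        IsToeplitz E (fun t => fourier (-(n : ℤ)) t * h t) Ta →
        essNorm Ta ≤
          (MeasureTheory.eLpNorm (fun t => fourier (-(n : ℤ)) t * h t) ⊤ mUC).toReal := by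
  intro n _ h hh hh_neg Ta hTa
  set M := E.hardyMulOp hh hh_neg
  have hnorm : eLpNorm (fun t => fourier (-(n : ℤ)) t * h t) ⊤ mUC = eLpNorm h ⊤ mUC :=
    eLpNorm_congr_norm_ae (.of_forall fun t => by rw [norm_mul, norm_fourier_eq_one, one_mul])
  rw [hTa.ext (hT1.shift_pow_mul (BFS.isToeplitz_hardyMulOp hh hh_neg) n), hnorm]
  calc essNorm (T1 ^ n * M)
      ≤ essNorm (T1 ^ n) * essNorm M := essNorm_mul_le _ _
    _ ≤ 1 * ‖M‖ :=
        mul_le_mul (by simpa [hess] using essNorm_pow_le T1 n) (essNorm_le_norm M)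
          (essNorm_nonneg M) zero_le_one
    _ ≤ (eLpNorm h ⊤ mUC).toReal := by rw [one_mul]; exact BFS.norm_hardyMulOp_le hh hh_neg
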